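/- arXiv:1202.1798 — 5 statements merged into one kernel-verified Lean document; each statement's English description precedes it below -/
import Mathlib

section
/- For fixed t > 0, H ∈ (0,1) with H ≠ 1/2, a < -t, and 0 < γ < min(1-H, 1/2), the integral ∫_{-∞}^{a} |∂_s F_t(s)| · (-s)^{1/2+γ} ds is finite, where F_t(s) = (-t-s)^{H-1/2} - (-s)^{H-1/2}. -/
open Real MeasureTheory Set

/-!
Put `u = -s`, so the integrand is `|H - 1/2| |u ^ p - (u - t) ^ p| u ^ q` on `u > -a > t` with
`p = H - 3/2` and `q = 1/2 + γ`. By the mean value theorem `|u ^ p - (u - t) ^ p|` is at most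
`|p| t (u - t) ^ (p - 1)`, and `(u - t) ^ (p - 1) ≲ u ^ (p - 1)` since `u - t ≥ (1 + t/a) u`.
The integrand is therefore `O(u ^ (p + q - 1))`, and `p + q - 1 = H + γ - 2 < -1`.
-/

theorem integrableOn_Iio_comp_neg_iff {E : Type*} [NormedAddCommGroup E] {f : ℝ → E} {c : ℝ} :
    IntegrableOn (fun x => f (-x)) (Iio c) ↔ IntegrableOn f (Ioi (-c)) := by
  have h := (Measure.measurePreserving_neg (volume : Measure ℝ)).integrableOn_comp_preimage
    (Homeomorph.neg ℝ).measurableEmbedding (f := f) (s := Ioi (-c))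
  rwa [neg_preimage, neg_Ioi, neg_neg] at h

theorem abs_rpow_sub_rpow_sub_le {p t u : ℝ} (hp : p ≤ 1) (ht : 0 ≤ t) (htu : t < u) :
    |u ^ p - (u - t) ^ p| ≤ |p| * (u - t) ^ (p - 1) * t := by
  have hpos : 0 < u - t := sub_pos.mpr htu
  have h := Convex.norm_image_sub_le_of_norm_hasDerivWithin_le (f := fun x : ℝ => x ^ p)
    (f' := fun x => p * x ^ (p - 1)) (C := |p| * (u - t) ^ (p - 1)) (s := Icc (u - t) u)
    (fun x hx => (hasDerivAt_rpow_const (Or.inl (hpos.trans_le hx.1).ne')).hasDerivWithinAt)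
    (fun x hx => by
      rw [norm_mul, norm_eq_abs, norm_of_nonneg (rpow_nonneg (hpos.trans_le hx.1).le _)]
      exact mul_le_mul_of_nonneg_left (rpow_le_rpow_of_nonpos hpos hx.1 (by linarith))
        (abs_nonneg p))
    (convex_Icc _ _) (left_mem_Icc.mpr (by linarith)) (right_mem_Icc.mpr (by linarith))
  simpa [norm_eq_abs, abs_of_nonneg ht] using h

theorem rpow_sub_le_mul_rpow {r t A u : ℝ} (hr : r ≤ 0) (ht : 0 ≤ t) (htA : t < A)
    (hAu : A ≤ u) : (u - t) ^ r ≤ (1 - t / A) ^ r * u ^ r := by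
  have hA : 0 < A := ht.trans_lt htA
  have hc : 0 < 1 - t / A := sub_pos.mpr ((div_lt_one hA).mpr htA)
  rw [← mul_rpow hc.le (hA.le.trans hAu)]
  refine rpow_le_rpow_of_nonpos (mul_pos hc (hA.trans_le hAu)) ?_ hr
  have : t * A ≤ t * u := mul_le_mul_of_nonneg_left hAu ht
  rw [sub_mul, one_mul, div_mul_eq_mul_div, sub_le_sub_iff_left, le_div_iff₀ hA]
  linarith

theorem continuousOn_abs_rpow_sub_rpow_mul_rpow {p q t A : ℝ} (ht : 0 ≤ t) (htA : t < A) :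
    ContinuousOn (fun u => |u ^ p - (u - t) ^ p| * u ^ q) (Ioi A) := by
  have hsub_pos : ∀ u ∈ Ioi A, 0 < u - t := fun u (hu : A < u) => by linarith
  have hpos : ∀ u ∈ Ioi A, 0 < u := fun u hu => (hsub_pos u hu).trans_le (by linarith)
  have hid : ContinuousOn (fun u : ℝ => u) (Ioi A) := continuousOn_id
  have hsub : ContinuousOn (fun u : ℝ => u - t) (Ioi A) := by fun_prop
  exact ((hid.rpow_const fun u hu => Or.inl (hpos u hu).ne').sub
    (hsub.rpow_const fun u hu => Or.inl (hsub_pos u hu).ne')).abs.mul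
    (hid.rpow_const fun u hu => Or.inl (hpos u hu).ne')

theorem integrableOn_Ioi_abs_rpow_sub_rpow_mul_rpow {p q t A : ℝ} (ht : 0 ≤ t) (htA : t < A)
    (hp : p ≤ 1) (hpq : p + q < 0) :
    IntegrableOn (fun u => |u ^ p - (u - t) ^ p| * u ^ q) (Ioi A) := by
  have hA : 0 < A := ht.trans_lt htA
  have hdom : IntegrableOn (fun u => |p| * (1 - t / A) ^ (p - 1) * t * u ^ (p - 1 + q))
      (Ioi A) :=
    (integrableOn_Ioi_rpow_of_lt (by linarith) hA).const_mul _
  refine hdom.mono' ((continuousOn_abs_rpow_sub_rpow_mul_rpow ht htA).aestronglyMeasurable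
    measurableSet_Ioi) ((ae_restrict_mem measurableSet_Ioi).mono fun u (hu : A < u) => ?_)
  have hu0 : 0 < u := hA.trans hu
  calc ‖|u ^ p - (u - t) ^ p| * u ^ q‖
      = |u ^ p - (u - t) ^ p| * u ^ q := by
        rw [norm_mul, norm_abs_eq_norm, norm_eq_abs, norm_of_nonneg (rpow_nonneg hu0.le _)]
    _ ≤ |p| * (u - t) ^ (p - 1) * t * u ^ q := by
        gcongr
        exact abs_rpow_sub_rpow_sub_le hp ht (htA.trans hu)
    _ ≤ |p| * ((1 - t / A) ^ (p - 1) * u ^ (p - 1)) * t * u ^ q := by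
        gcongr
        exact rpow_sub_le_mul_rpow (by linarith) ht htA hu.le
    _ = |p| * (1 - t / A) ^ (p - 1) * t * u ^ (p - 1 + q) := by
        rw [rpow_add hu0]; ring

theorem deriv_F_weighted_integrable_general (t H a γ : ℝ) (ht : 0 < t)
    (hH1 : H < 1) (ha : a < -t)
    (hγ : γ < min (1 - H) (1/2)) :
    IntegrableOn
      (fun s : ℝ => |(H - 1/2) * ((-s) ^ (H - 3/2) - (-t - s) ^ (H - 3/2))|
        * (-s) ^ (1/2 + γ))
      (Set.Iio a) := by
  have hγH : γ < 1 - H := hγ.trans_le (min_le_left _ _)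
  have h := integrableOn_Ioi_abs_rpow_sub_rpow_mul_rpow (p := H - 3/2) (q := 1/2 + γ) ht.le
    (lt_neg_of_lt_neg ha) (by linarith) (by linarith)
  have h' := (integrableOn_Iio_comp_neg_iff (c := a)).mpr (h.const_mul |H - 1/2|)
  refine h'.congr_fun (fun s _ => ?_) measurableSet_Iio
  simp only [abs_mul, neg_sub_comm t s, mul_assoc]

theorem deriv_F_weighted_integrable (t H a γ : ℝ) (ht : 0 < t) (hH0 : 0 < H)
    (hH1 : H < 1) (hHne : H ≠ 1/2) (ha : a < -t)
    (hγ0 : 0 < γ) (hγ : γ < min (1 - H) (1/2)) :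
    IntegrableOn
      (fun s : ℝ => |(H - 1/2) * ((-s) ^ (H - 3/2) - (-t - s) ^ (H - 3/2))|
        * (-s) ^ (1/2 + γ))
      (Set.Iio a) :=
  deriv_F_weighted_integrable_general t H a γ ht hH1 ha hγ
end

section
/- Let H ∈ (1/2, 1), t ∈ (0, T], a < -T, and ε ∈ (1/a, 0). Then ∫_{1/a}^{ε} |∂_s F_t(1/v)| · (1/|v|^3) dv ≤ T (3/2 - H)(1 + T/a)^{H-5/2} (-ε)^{1/2-H}, where F_t(s) = (-t-s)^{H-1/2} - (-s)^{H-1/2}. -/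
/-!
By the mean value theorem for `u ↦ u^{H-3/2}`, whose derivative shrinks in absolute value as `u`
grows, `|∂_s F_t(s)| ≤ (H-1/2)(3/2-H) t (-t-s)^{H-5/2}`. After `s = 1/v` the factor
`(-t-1/v)^{H-5/2} |v|^{-3}` splits as `(tv+1)^{H-5/2} (-v)^{-1/2-H}`, and `tv + 1 ≥ 1 + T/a` on
`[1/a, ε]`. Finally `∫_{1/a}^{ε} (-v)^{-1/2-H} dv ≤ (-ε)^{1/2-H}/(H-1/2)`, which cancels the
factor `H - 1/2`, and `t ≤ T`.
-/

open Real MeasureTheory intervalIntegral Set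

/-- `∂_s F_t(s)`. -/
noncomputable def kernelDeriv (H t s : ℝ) : ℝ :=
  (H - 1/2) * ((-s) ^ (H - 3/2) - (-t - s) ^ (H - 3/2))

lemma rpow_sub_rpow_le_of_nonpos {p x y : ℝ} (hp : p ≤ 0) (hx : 0 < x) (hxy : x ≤ y) :
    x ^ p - y ^ p ≤ -p * x ^ (p - 1) * (y - x) := by
  rcases hxy.eq_or_lt with rfl | hlt
  · simp
  have hcont : ContinuousOn (fun u : ℝ => u ^ p) (Icc x y) :=
    continuousOn_id.rpow_const fun u hu => Or.inl (hx.trans_le hu.1).ne'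
  have hderiv : ∀ u ∈ Ioo x y, HasDerivAt (fun u : ℝ => u ^ p) (p * u ^ (p - 1)) u :=
    fun u hu => hasDerivAt_rpow_const (Or.inl (hx.trans hu.1).ne')
  obtain ⟨c, hc, hslope⟩ := exists_hasDerivAt_eq_slope _ _ hlt hcont hderiv
  have hmvt : x ^ p - y ^ p = -p * c ^ (p - 1) * (y - x) := by
    rw [eq_div_iff (sub_pos.mpr hlt).ne'] at hslope
    linarith
  have hdecr : c ^ (p - 1) ≤ x ^ (p - 1) := rpow_le_rpow_of_nonpos hx hc.1.le (by linarith)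
  rw [hmvt]
  gcongr
  linarith

lemma abs_kernelDeriv_le {H t s : ℝ} (hH : H ≤ 3/2) (ht : 0 ≤ t) (hs : s < -t) :
    |kernelDeriv H t s| ≤ |H - 1/2| * (3/2 - H) * t * (-t - s) ^ (H - 5/2) := by
  have hx : 0 < -t - s := by linarith
  have hxy : -t - s ≤ -s := by linarith
  have hmono : (-s) ^ (H - 3/2) ≤ (-t - s) ^ (H - 3/2) :=
    rpow_le_rpow_of_nonpos hx hxy (by linarith)
  have hmvt := rpow_sub_rpow_le_of_nonpos (p := H - 3/2) (by linarith) hx hxy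
  rw [kernelDeriv, abs_mul, abs_of_nonpos (sub_nonpos.mpr hmono), mul_assoc, mul_assoc]
  rw [show H - 3/2 - 1 = H - 5/2 by ring, show -s - (-t - s) = t by ring] at hmvt
  gcongr
  linarith

lemma rpow_neg_sub_one_div_mul_one_div_abs_pow {t v q : ℝ} (n : ℕ) (hv : v < 0)
    (htv : 0 ≤ t * v + 1) :
    (-t - 1/v) ^ q * (1 / |v| ^ n) = (t * v + 1) ^ q * (-v) ^ (-q - n) := by
  have hnv : 0 < -v := neg_pos.mpr hv
  have hsplit : -t - 1/v = (t * v + 1) / (-v) := by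
    rw [div_neg, add_div, mul_div_cancel_right₀ _ hv.ne]
    ring
  rw [hsplit, div_rpow htv hnv.le, abs_of_neg hv, ← rpow_natCast, sub_eq_add_neg (-q),
    rpow_add hnv, rpow_neg hnv.le, rpow_neg hnv.le]
  ring

lemma one_add_div_le_mul_add_one {T t a v : ℝ} (ha : a < 0) (ht : 0 ≤ t) (htT : t ≤ T)
    (hv : 1/a ≤ v) : 1 + T / a ≤ t * v + 1 :=
  calc 1 + T / a ≤ 1 + t / a := by gcongr 1 + ?_; exact div_le_div_of_nonpos_of_le ha.le htT
    _ = t * (1/a) + 1 := by ring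
    _ ≤ t * v + 1 := by gcongr

lemma abs_kernelDeriv_inv_mul_le {H t v c : ℝ} (hH : H ≤ 3/2) (ht : 0 ≤ t) (hv : v < 0)
    (hc : 0 < c) (hcv : c ≤ t * v + 1) :
    |kernelDeriv H t (1/v)| * (1 / |v| ^ 3)
      ≤ |H - 1/2| * (3/2 - H) * t * c ^ (H - 5/2) * (-v) ^ (-(H - 1/2) - 1) := by
  have hs : 1/v < -t := by
    rw [div_lt_iff_of_neg hv]
    linarith
  calc |kernelDeriv H t (1/v)| * (1 / |v| ^ 3)
      ≤ |H - 1/2| * (3/2 - H) * t * ((-t - 1/v) ^ (H - 5/2) * (1 / |v| ^ 3)) := by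
        rw [← mul_assoc]
        gcongr
        exact abs_kernelDeriv_le hH ht hs
    _ = |H - 1/2| * (3/2 - H) * t * ((t * v + 1) ^ (H - 5/2) * (-v) ^ (-(H - 1/2) - 1)) := by
        rw [rpow_neg_sub_one_div_mul_one_div_abs_pow 3 hv (hc.le.trans hcv)]
        ring_nf
    _ ≤ |H - 1/2| * (3/2 - H) * t * c ^ (H - 5/2) * (-v) ^ (-(H - 1/2) - 1) := by
        rw [mul_assoc _ (c ^ _)]
        have hcoef : 0 ≤ |H - 1/2| * (3/2 - H) * t :=
          mul_nonneg (mul_nonneg (abs_nonneg _) (by linarith)) ht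
        refine mul_le_mul_of_nonneg_left (mul_le_mul_of_nonneg_right ?_ ?_) hcoef
        · exact rpow_le_rpow_of_nonpos hc hcv (by linarith)
        · exact rpow_nonneg (by linarith) _

lemma integral_neg_rpow_le {r b c : ℝ} (hr : 0 < r) (hbc : b ≤ c) (hc : c < 0) :
    ∫ v in b..c, (-v) ^ (-r - 1) ≤ (-c) ^ (-r) / r := by
  have hexp : -r - 1 + 1 = -r := by ring
  rw [integral_comp_neg (fun u => u ^ (-r - 1)),
    integral_rpow (Or.inr ⟨by linarith, notMem_uIcc_of_lt (by linarith) (by linarith)⟩), hexp,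
    div_neg, ← neg_div, neg_sub, div_le_div_iff_of_pos_right hr, sub_le_self_iff]
  exact rpow_nonneg (by linarith) _

lemma intervalIntegrable_neg_rpow {r b c : ℝ} (hbc : b ≤ c) (hc : c < 0) :
    IntervalIntegrable (fun v => (-v) ^ r) volume b c := by
  refine (continuousOn_id.neg.rpow_const fun v hv => ?_).intervalIntegrable
  rw [uIcc_of_le hbc] at hv
  exact Or.inl (neg_ne_zero.mpr (hv.2.trans_lt hc).ne)

lemma intervalIntegral.integral_mono_of_nonneg {f g : ℝ → ℝ} {a b : ℝ} (hab : a ≤ b)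
    (hg : IntervalIntegrable g volume a b) (hf : ∀ x ∈ Ioc a b, 0 ≤ f x)
    (hfg : ∀ x ∈ Ioc a b, f x ≤ g x) :
    ∫ x in a..b, f x ≤ ∫ x in a..b, g x := by
  rw [integral_of_le hab, integral_of_le hab]
  exact MeasureTheory.integral_mono_of_nonneg (ae_restrict_of_forall_mem measurableSet_Ioc hf)
    hg.1 (ae_restrict_of_forall_mem measurableSet_Ioc hfg)

theorem inverted_integral_bound (H T t a ε : ℝ) (hH : 1/2 < H) (hH1 : H < 1)
    (hT : 0 < T) (ha : a < -T) (ht0 : 0 < t) (htT : t ≤ T)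
    (hε1 : 1/a < ε) (hε2 : ε < 0) :
    (∫ v in (1/a)..ε,
        |(H - 1/2) * ((-(1/v)) ^ (H - 3/2) - (-t - 1/v) ^ (H - 3/2))| * (1 / |v| ^ 3))
      ≤ T * (3/2 - H) * (1 + T / a) ^ (H - 5/2) * (-ε) ^ (1/2 - H) := by
  have ha0 : a < 0 := by linarith
  have hH' : 0 < H - 1/2 := by linarith
  have hTa : 0 < 1 + T / a := by
    have : -1 < T / a := by
      rw [lt_div_iff_of_neg ha0]
      linarith
    linarith
  set K := (H - 1/2) * (3/2 - H) * t * (1 + T / a) ^ (H - 5/2) with hK_def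
  have hK : 0 ≤ K :=
    mul_nonneg (mul_nonneg (mul_nonneg hH'.le (by linarith)) ht0.le) (rpow_nonneg hTa.le _)
  have hpointwise : ∀ v ∈ Ioc (1/a) ε,
      |kernelDeriv H t (1/v)| * (1 / |v| ^ 3) ≤ K * (-v) ^ (-(H - 1/2) - 1) := fun v hv => by
    simpa only [abs_of_pos hH'] using abs_kernelDeriv_inv_mul_le (H := H) (by linarith) ht0.le
      (hv.2.trans_lt hε2) hTa (one_add_div_le_mul_add_one ha0 ht0.le htT hv.1.le)
  calc (∫ v in (1/a)..ε, |kernelDeriv H t (1/v)| * (1 / |v| ^ 3))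
      ≤ ∫ v in (1/a)..ε, K * (-v) ^ (-(H - 1/2) - 1) :=
        intervalIntegral.integral_mono_of_nonneg hε1.le
          ((intervalIntegrable_neg_rpow hε1.le hε2).const_mul K) (fun v _ => by positivity)
          hpointwise
    _ = K * ∫ v in (1/a)..ε, (-v) ^ (-(H - 1/2) - 1) := integral_const_mul _ _
    _ ≤ K * ((-ε) ^ (-(H - 1/2)) / (H - 1/2)) := by
        gcongr
        exact integral_neg_rpow_le hH' hε1.le hε2
    _ = t * (3/2 - H) * (1 + T / a) ^ (H - 5/2) * (-ε) ^ (1/2 - H) := by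
        rw [neg_sub, mul_div_assoc', div_eq_iff hH'.ne', hK_def]
        ring
    _ ≤ T * (3/2 - H) * (1 + T / a) ^ (H - 5/2) * (-ε) ^ (1/2 - H) := by
        have : 0 ≤ (-ε) ^ (1/2 - H) := rpow_nonneg (by linarith) _
        gcongr
        linarith
end

section
/- Let H ∈ (0, 1/2), 0 < γ < H, t > 0, ε < 0, and Y > 0. Suppose g : ℝ → ℝ satisfies |g(u) - g(v)| ≤ Y |u - v|^{1/2-γ} for all u, v. Then |∫_{max(ε,-t)}^{0} [(-s)^{H-1/2} - (-s-ε)^{H-1/2}] dg(s)| interpreted via Fubini as ∫_0^{-ε-max(ε,-t)} (1/2-H) x^{H-3/2} [g(min(-x-ε,0)) - g(max(-t, ε, -x))] dx is bounded by ((1/2-H) 2^{H-2γ+1/2}/(H-γ)) Y (-ε)^{H-γ}. -/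
/-!
Each factor of the integrand is controlled separately: the two evaluation points of `g` are
at distance at most `2x`, so by Hölder continuity the bracket is `O(x^(1/2-γ))`, and the
integrand is dominated by a multiple of `x^(H-γ-1)`, which is integrable at `0` because
`H > γ`. Integrating up to `u = -ε - max ε (-t) ≤ -2ε` gives the bound.
-/

open Real MeasureTheory intervalIntegral

lemma abs_min_sub_max_le_two_mul {ε m x : ℝ} (hεm : ε ≤ m) (hm : m ≤ 0) (hx₀ : 0 ≤ x)
    (hx : x ≤ -ε - m) : |min (-x - ε) 0 - max m (-x)| ≤ 2 * x := by
  have hle : max m (-x) ≤ min (-x - ε) 0 :=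
    max_le (le_min (by linarith) hm) (le_min (by linarith) (by linarith))
  rw [abs_of_nonneg (sub_nonneg.2 hle)]
  rcases le_total x (-ε) with h | h
  · linarith [min_le_right (-x - ε) 0, le_max_right m (-x)]
  · linarith [min_le_left (-x - ε) 0, le_max_left m (-x)]

lemma abs_sub_le_of_holder {g : ℝ → ℝ} {Y α a b x : ℝ} (hY : 0 ≤ Y) (hα : 0 ≤ α)
    (hg : ∀ u v, |g u - g v| ≤ Y * |u - v| ^ α) (hx : 0 ≤ x) (hab : |a - b| ≤ 2 * x) :
    |g a - g b| ≤ Y * 2 ^ α * x ^ α :=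
  calc |g a - g b| ≤ Y * |a - b| ^ α := hg a b
    _ ≤ Y * (2 * x) ^ α := by gcongr
    _ = Y * 2 ^ α * x ^ α := by rw [mul_rpow zero_le_two hx, mul_assoc]

lemma integral_const_mul_rpow_sub_one {C s u : ℝ} (hs : 0 < s) :
    ∫ x in (0:ℝ)..u, C * x ^ (s - 1) = C * (u ^ s / s) := by
  rw [intervalIntegral.integral_const_mul, integral_rpow (Or.inl (by linarith)), sub_add_cancel,
    zero_rpow hs.ne', sub_zero]

lemma abs_integral_le_of_abs_le_rpow {f : ℝ → ℝ} {C s u : ℝ} (hs : 0 < s) (hu : 0 ≤ u)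
    (hf : ∀ x ∈ Set.Ioc 0 u, |f x| ≤ C * x ^ (s - 1)) :
    |∫ x in (0:ℝ)..u, f x| ≤ C * (u ^ s / s) := by
  rw [← integral_const_mul_rpow_sub_one hs, ← norm_eq_abs]
  refine norm_integral_le_of_norm_le hu (Filter.Eventually.of_forall hf) ?_
  exact (intervalIntegral.intervalIntegrable_rpow' (by linarith)).const_mul C

theorem fubini_holder_bound_A1_general (H γ t ε Y : ℝ) (g : ℝ → ℝ)
    (hH : H < 1/2) (hγ : γ < H)
    (ht : 0 < t) (hε : ε < 0) (hY : 0 < Y)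
    (hg : ∀ u v : ℝ, |g u - g v| ≤ Y * |u - v| ^ (1/2 - γ)) :
    |∫ x in (0:ℝ)..(-ε - max ε (-t)),
        (1/2 - H) * x ^ (H - 3/2) * (g (min (-x - ε) 0) - g (max (max (-t) ε) (-x)))|
      ≤ ((1/2 - H) * 2 ^ (H - 2*γ + 1/2) / (H - γ)) * Y * (-ε) ^ (H - γ) := by
  set C := (1/2 - H) * (Y * 2 ^ (1/2 - γ))
  have hu : 0 ≤ -ε - max ε (-t) := by linarith [max_le hε.le (neg_nonpos.2 ht.le)]
  have hu₂ : -ε - max ε (-t) ≤ 2 * -ε := by linarith [le_max_left ε (-t)]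
  have hbound : ∀ x ∈ Set.Ioc 0 (-ε - max ε (-t)),
      |(1/2 - H) * x ^ (H - 3/2) * (g (min (-x - ε) 0) - g (max (max (-t) ε) (-x)))|
        ≤ C * x ^ (H - γ - 1) := by
    rintro x ⟨hx₀, hx⟩
    have hdist := abs_min_sub_max_le_two_mul (m := max (-t) ε) (le_max_right _ _)
      (max_le (neg_nonpos.2 ht.le) hε.le) hx₀.le (by rwa [max_comm])
    have hholder := abs_sub_le_of_holder hY.le (by linarith) hg hx₀.le hdist
    rw [abs_mul, abs_mul, abs_of_pos (by linarith : (0:ℝ) < 1/2 - H),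
      abs_of_nonneg (rpow_nonneg hx₀.le _)]
    calc (1/2 - H) * x ^ (H - 3/2) * |g _ - g _|
        ≤ (1/2 - H) * x ^ (H - 3/2) * (Y * 2 ^ (1/2 - γ) * x ^ (1/2 - γ)) := by gcongr
      _ = C * x ^ (H - γ - 1) := by
        rw [show H - γ - 1 = (H - 3/2) + (1/2 - γ) by ring, rpow_add hx₀]; ring
  calc _ ≤ C * ((-ε - max ε (-t)) ^ (H - γ) / (H - γ)) :=
        abs_integral_le_of_abs_le_rpow (sub_pos.2 hγ) hu hbound
    _ ≤ C * ((2 * -ε) ^ (H - γ) / (H - γ)) := by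
        have : 0 ≤ C := by positivity
        gcongr
    _ = _ := by
        rw [mul_rpow zero_le_two (by linarith), show H - 2*γ + 1/2 = (1/2 - γ) + (H - γ) by ring,
          rpow_add two_pos]
        ring

theorem fubini_holder_bound_A1 (H γ t ε Y : ℝ) (g : ℝ → ℝ)
    (hH0 : 0 < H) (hH : H < 1/2) (hγ0 : 0 < γ) (hγ : γ < H)
    (ht : 0 < t) (hε : ε < 0) (hY : 0 < Y)
    (hg : ∀ u v : ℝ, |g u - g v| ≤ Y * |u - v| ^ (1/2 - γ)) :
    |∫ x in (0:ℝ)..(-ε - max ε (-t)),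
        (1/2 - H) * x ^ (H - 3/2) * (g (min (-x - ε) 0) - g (max (max (-t) ε) (-x)))|
      ≤ ((1/2 - H) * 2 ^ (H - 2*γ + 1/2) / (H - γ)) * Y * (-ε) ^ (H - γ) :=
  fubini_holder_bound_A1_general H γ t ε Y g hH hγ ht hε hY hg
end

section
/- Let H ∈ (0, 1/2), 0 < γ < H, T > 0, a < -T, and ε < 0. Suppose g : [a, 0] → ℝ satisfies |g(u) - g(v)| ≤ Y|u-v|^{1/2-γ}. Then for every t ∈ (0, T] with t < -ε, |∫_{max(a, -t+ε)}^{-t} F_t(s) dg(s)|, interpreted via the Fubini representation ∫_0^{-max(a,-t+ε)} (1/2-H) x^{H-3/2}[g(min(-x,-t)) - g(max(-t-x, a, -t+ε))] dx, is at most ((1/2-H)/(H-γ)) 2^{H-γ} Y (-ε)^{H-γ}, where F_t(s) = (-t-s)^{H-1/2} - (-s)^{H-1/2}. -/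
open Real MeasureTheory intervalIntegral

/-! Write `u = -max a (-t + ε)`. On `(0, u]` the two arguments of `g` lie in `[a, 0]` at distance at most `x`, so Hölder
continuity bounds the integrand by `(1/2 - H) Y x^(H-γ-1)`, which is integrable at `0` since
`H - γ > 0`; integrating gives `(1/2 - H) Y u^(H-γ) / (H - γ)`, and `u ≤ t - ε < -2ε`. -/

theorem norm_integral_zero_le_of_norm_le_mul_rpow {E : Type*} [NormedAddCommGroup E]
    [NormedSpace ℝ E] {f : ℝ → E} {C β u : ℝ} (hβ : 0 < β) (hu : 0 ≤ u)
    (hf : ∀ x ∈ Set.Ioc 0 u, ‖f x‖ ≤ C * x ^ (β - 1)) :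
    ‖∫ x in (0:ℝ)..u, f x‖ ≤ C * (u ^ β / β) := by
  have hint : IntervalIntegrable (fun x : ℝ => C * x ^ (β - 1)) volume 0 u :=
    (intervalIntegrable_rpow' (by linarith)).const_mul _
  calc ‖∫ x in (0:ℝ)..u, f x‖ ≤ ∫ x in (0:ℝ)..u, C * x ^ (β - 1) :=
        norm_integral_le_of_norm_le hu (Filter.Eventually.of_forall hf) hint
    _ = C * (u ^ β / β) := by
        rw [intervalIntegral.integral_const_mul, integral_rpow (Or.inl (by linarith)),
          sub_add_cancel, zero_rpow hβ.ne', sub_zero]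

section Endpoints

variable {a t ε x : ℝ}

theorem min_neg_mem_Icc (ht : 0 ≤ t) (hat : a ≤ -t) (hax : a ≤ -x) :
    min (-x) (-t) ∈ Set.Icc a 0 :=
  ⟨le_min hax hat, (min_le_right _ _).trans (by linarith)⟩

theorem max_max_mem_Icc (ht : 0 ≤ t) (hx : 0 ≤ x) (hxa : max a (-t + ε) ≤ -x) :
    max (max (-t - x) a) (-t + ε) ∈ Set.Icc a 0 := by
  obtain ⟨hax, htx⟩ := max_le_iff.1 hxa
  exact ⟨(le_max_right _ _).trans (le_max_left _ _),
    max_le (max_le (by linarith) (by linarith)) (by linarith)⟩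

theorem abs_min_neg_sub_max_max_le (ht : 0 ≤ t) (hat : a ≤ -t) (hε : ε ≤ 0) (hx : 0 ≤ x)
    (hxa : max a (-t + ε) ≤ -x) :
    |min (-x) (-t) - max (max (-t - x) a) (-t + ε)| ≤ x := by
  obtain ⟨hax, htx⟩ := max_le_iff.1 hxa
  have hqp : max (max (-t - x) a) (-t + ε) ≤ min (-x) (-t) :=
    le_min (max_le (max_le (by linarith) hax) htx) (max_le (max_le (by linarith) hat) (by linarith))
  rw [abs_sub_le_iff]
  constructor
  · linarith [min_le_right (-x) (-t), (le_max_left (-t - x) a).trans (le_max_left _ (-t + ε))]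
  · linarith

end Endpoints

theorem rpow_mul_abs_sub_le_of_holder {g : ℝ → ℝ} {Y α κ x u v : ℝ} (hY : 0 ≤ Y)
    (hα : 0 ≤ α) (hx : 0 < x) (hg : |g u - g v| ≤ Y * |u - v| ^ α) (huv : |u - v| ≤ x) :
    x ^ κ * |g u - g v| ≤ Y * x ^ (κ + α) :=
  calc x ^ κ * |g u - g v| ≤ x ^ κ * (Y * x ^ α) := by
        gcongr
        exact hg.trans (by gcongr)
    _ = Y * x ^ (κ + α) := by rw [rpow_add hx]; ring

theorem fubini_holder_bound_A2_general (H γ T a ε Y : ℝ) (g : ℝ → ℝ)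
    (hH : H < 1/2) (hγ : γ < H)
    (ha : a < -T) (hε : ε < 0) (hY : 0 < Y)
    (hg : ∀ u ∈ Set.Icc a (0:ℝ), ∀ v ∈ Set.Icc a (0:ℝ),
      |g u - g v| ≤ Y * |u - v| ^ (1/2 - γ)) :
    ∀ t ∈ Set.Ioc (0:ℝ) T, t < -ε →
      |∫ x in (0:ℝ)..(-(max a (-t + ε))),
          (1/2 - H) * x ^ (H - 3/2)
            * (g (min (-x) (-t)) - g (max (max (-t - x) a) (-t + ε)))|
        ≤ ((1/2 - H) / (H - γ)) * 2 ^ (H - γ) * Y * (-ε) ^ (H - γ) := by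
  rintro t ⟨ht0, htT⟩ htε
  have hu0 : 0 ≤ -max a (-t + ε) := neg_nonneg.2 (max_le (by linarith) (by linarith))
  have hu : -max a (-t + ε) ≤ 2 * -ε := by linarith [le_max_right a (-t + ε)]
  have hintegrand : ∀ x ∈ Set.Ioc 0 (-max a (-t + ε)),
      ‖(1/2 - H) * x ^ (H - 3/2) * (g (min (-x) (-t)) - g (max (max (-t - x) a) (-t + ε)))‖
        ≤ (1/2 - H) * Y * x ^ ((H - γ) - 1) := by
    rintro x ⟨hx0, hxu⟩
    have hxa : max a (-t + ε) ≤ -x := le_neg.1 hxu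
    have hp := min_neg_mem_Icc ht0.le (by linarith) ((le_max_left _ _).trans hxa)
    have hq := max_max_mem_Icc ht0.le hx0.le hxa
    have hpq := abs_min_neg_sub_max_max_le ht0.le (by linarith) hε.le hx0.le hxa
    rw [norm_eq_abs, abs_mul, abs_mul, abs_of_pos (by linarith), abs_of_pos (rpow_pos_of_pos hx0 _),
      mul_assoc, mul_assoc, show H - γ - 1 = H - 3/2 + (1/2 - γ) by ring]
    exact mul_le_mul_of_nonneg_left
      (rpow_mul_abs_sub_le_of_holder hY.le (by linarith) hx0 (hg _ hp _ hq) hpq) (by linarith)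
  calc _ ≤ (1/2 - H) * Y * ((-max a (-t + ε)) ^ (H - γ) / (H - γ)) :=
        norm_integral_zero_le_of_norm_le_mul_rpow (by linarith) hu0 hintegrand
    _ ≤ (1/2 - H) * Y * ((2 * -ε) ^ (H - γ) / (H - γ)) := by
        have : 0 < 1/2 - H := by linarith
        have : 0 < H - γ := by linarith
        gcongr
    _ = _ := by rw [mul_rpow zero_le_two (by linarith)]; ring

theorem fubini_holder_bound_A2 (H γ T a ε Y : ℝ) (g : ℝ → ℝ)
    (hH0 : 0 < H) (hH : H < 1/2) (hγ0 : 0 < γ) (hγ : γ < H)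
    (hT : 0 < T) (ha : a < -T) (hε : ε < 0) (hY : 0 < Y)
    (hg : ∀ u ∈ Set.Icc a (0:ℝ), ∀ v ∈ Set.Icc a (0:ℝ),
      |g u - g v| ≤ Y * |u - v| ^ (1/2 - γ)) :
    ∀ t ∈ Set.Ioc (0:ℝ) T, t < -ε →
      |∫ x in (0:ℝ)..(-(max a (-t + ε))),
          (1/2 - H) * x ^ (H - 3/2)
            * (g (min (-x) (-t)) - g (max (max (-t - x) a) (-t + ε)))|
        ≤ ((1/2 - H) / (H - γ)) * 2 ^ (H - γ) * Y * (-ε) ^ (H - γ) :=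
  fubini_holder_bound_A2_general H γ T a ε Y g hH hγ ha hε hY hg
end

section
/- Let H ∈ (0, 1/2), t ∈ (0, T], a < -T, ε < 0. Then |F_t(max(a, -t+ε))| + |F_t(a)| + ∫_a^{max(a,-t+ε)} |∂_s F_t(s)| ds = 2[(-t - max(a,-t+ε))^{H-1/2} - (-max(a,-t+ε))^{H-1/2}] ≤ 2((-ε)^{H-1/2} + (-T-a)^{H-1/2}), where F_t(s) = (-t-s)^{H-1/2} - (-s)^{H-1/2}. -/
/-!
For `p = H - 1/2 < 0` the kernel `F_t(s) = (-t - s)^p - (-s)^p` is positive and increasing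
on `s < -t`, so its total variation on `[a, b]` is `F_t(b) - F_t(a)`, and adding
`|F_t(b)| + |F_t(a)|` leaves `2 F_t(b) ≤ 2 (-t - b)^p`. Finally
`-t - b = min (-ε) (-t - a) ≥ min (-ε) (-T - a)`, and `x ↦ x^p` is antitone.
-/

open Real MeasureTheory intervalIntegral

theorem intervalIntegral.integral_abs_eq_sub_of_hasDerivAt_of_nonneg {f f' : ℝ → ℝ}
    {a b : ℝ} (hab : a ≤ b) (hf : ∀ x ∈ Set.Icc a b, HasDerivAt f (f' x) x)
    (hf' : ∀ x ∈ Set.Icc a b, 0 ≤ f' x) (hint : IntervalIntegrable f' volume a b) :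
    ∫ x in a..b, |f' x| = f b - f a := by
  rw [← Set.uIcc_of_le hab] at hf hf'
  rw [← integral_eq_sub_of_hasDerivAt hf hint]
  exact integral_congr fun x hx => abs_of_nonneg (hf' x hx)

theorem Real.rpow_min_le_rpow_add_rpow {x y : ℝ} (hx : 0 ≤ x) (hy : 0 ≤ y) (p : ℝ) :
    min x y ^ p ≤ x ^ p + y ^ p := by
  rcases min_choice x y with h | h <;> rw [h] <;> linarith [rpow_nonneg hx p, rpow_nonneg hy p]

section ShiftedPowerDifference

variable {p t s : ℝ}

theorem hasDerivAt_rpow_neg_sub_sub_rpow_neg (ht : 0 ≤ t) (hs : s < -t) :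
    HasDerivAt (fun x => (-t - x) ^ p - (-x) ^ p)
      (p * ((-s) ^ (p - 1) - (-t - s) ^ (p - 1))) s := by
  have hts : -t - s ≠ 0 := by linarith
  have hs' : -s ≠ 0 := by linarith
  have h₁ := (hasDerivAt_rpow_const (p := p) (Or.inl hts)).comp s
    ((hasDerivAt_id s).const_sub (-t))
  have h₂ := (hasDerivAt_rpow_const (p := p) (Or.inl hs')).comp s (hasDerivAt_neg s)
  exact (h₁.sub h₂).congr_deriv (by ring)

theorem integral_abs_deriv_rpow_neg_sub_sub_rpow_neg {a b : ℝ} (hp : p ≤ 0) (ht : 0 ≤ t)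
    (hab : a ≤ b) (hb : b < -t) :
    ∫ s in a..b, |p * ((-s) ^ (p - 1) - (-t - s) ^ (p - 1))|
      = ((-t - b) ^ p - (-b) ^ p) - ((-t - a) ^ p - (-a) ^ p) := by
  have hlt : ∀ s ∈ Set.Icc a b, s < -t := fun s hs => hs.2.trans_lt hb
  refine integral_abs_eq_sub_of_hasDerivAt_of_nonneg hab
    (fun s hs => hasDerivAt_rpow_neg_sub_sub_rpow_neg ht (hlt s hs)) (fun s hs => ?_) ?_
  · have := hlt s hs
    exact mul_nonneg_of_nonpos_of_nonpos hp (sub_nonpos.2 <|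
      rpow_le_rpow_of_nonpos (by linarith) (by linarith) (by linarith))
  · refine ContinuousOn.intervalIntegrable_of_Icc hab fun s hs => ?_
    have := hlt s hs
    refine (continuousAt_const.mul <| (continuousAt_neg.rpow_const (Or.inl ?_)).sub
      ((continuousAt_const.sub continuousAt_id).rpow_const (Or.inl ?_))).continuousWithinAt
    · exact show -s ≠ 0 by linarith
    · exact show -t - s ≠ 0 by linarith

end ShiftedPowerDifference

theorem F_variation_bound_H_lt_half_general (H T t a ε : ℝ) (hH : H < 1/2)
    (ht0 : 0 < t) (htT : t ≤ T) (ha : a < -T) (hε : ε < 0) :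
    (|(-t - max a (-t + ε)) ^ (H - 1/2) - (-(max a (-t + ε))) ^ (H - 1/2)|
        + |(-t - a) ^ (H - 1/2) - (-a) ^ (H - 1/2)|
        + (∫ s in a..(max a (-t + ε)),
            |(H - 1/2) * ((-s) ^ (H - 3/2) - (-t - s) ^ (H - 3/2))|)
      = 2 * ((-t - max a (-t + ε)) ^ (H - 1/2) - (-(max a (-t + ε))) ^ (H - 1/2))) ∧
    2 * ((-t - max a (-t + ε)) ^ (H - 1/2) - (-(max a (-t + ε))) ^ (H - 1/2))
      ≤ 2 * ((-ε) ^ (H - 1/2) + (-T - a) ^ (H - 1/2)) := by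
  set b := max a (-t + ε) with hb
  have hp : H - 1/2 < 0 := by linarith
  have hb_lt : b < -t := max_lt (by linarith) (by linarith)
  have hFa : 0 < (-t - a) ^ (H - 1/2) - (-a) ^ (H - 1/2) :=
    sub_pos.2 (rpow_lt_rpow_of_neg (by linarith) (by linarith) hp)
  have hFb : 0 < (-t - b) ^ (H - 1/2) - (-b) ^ (H - 1/2) :=
    sub_pos.2 (rpow_lt_rpow_of_neg (by linarith) (by linarith) hp)
  refine ⟨?_, ?_⟩
  · rw [show H - 3/2 = H - 1/2 - 1 by ring, integral_abs_deriv_rpow_neg_sub_sub_rpow_neg hp.le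
      ht0.le (le_max_left _ _) hb_lt, abs_of_pos hFa, abs_of_pos hFb]
    ring
  · have hmin : -t - b = min (-ε) (-t - a) := by
      rw [hb, ← min_sub_sub_left, min_comm, show -t - (-t + ε) = -ε by ring]
    calc 2 * ((-t - b) ^ (H - 1/2) - (-b) ^ (H - 1/2))
        ≤ 2 * (-t - b) ^ (H - 1/2) := by linarith [rpow_nonneg (by linarith : 0 ≤ -b) (H - 1/2)]
      _ ≤ 2 * min (-ε) (-T - a) ^ (H - 1/2) := by
          rw [hmin]
          gcongr 2 * ?_
          exact rpow_le_rpow_of_nonpos (lt_min (by linarith) (by linarith))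
            (min_le_min_left _ (by linarith)) hp.le
      _ ≤ 2 * ((-ε) ^ (H - 1/2) + (-T - a) ^ (H - 1/2)) := by
          gcongr
          exact rpow_min_le_rpow_add_rpow (by linarith) (by linarith) _

theorem F_variation_bound_H_lt_half (H T t a ε : ℝ) (hH0 : 0 < H) (hH : H < 1/2)
    (hT : 0 < T) (ht0 : 0 < t) (htT : t ≤ T) (ha : a < -T) (hε : ε < 0) :
    (|(-t - max a (-t + ε)) ^ (H - 1/2) - (-(max a (-t + ε))) ^ (H - 1/2)|
        + |(-t - a) ^ (H - 1/2) - (-a) ^ (H - 1/2)|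
        + (∫ s in a..(max a (-t + ε)),
            |(H - 1/2) * ((-s) ^ (H - 3/2) - (-t - s) ^ (H - 3/2))|)
      = 2 * ((-t - max a (-t + ε)) ^ (H - 1/2) - (-(max a (-t + ε))) ^ (H - 1/2))) ∧
    2 * ((-t - max a (-t + ε)) ^ (H - 1/2) - (-(max a (-t + ε))) ^ (H - 1/2))
      ≤ 2 * ((-ε) ^ (H - 1/2) + (-T - a) ^ (H - 1/2)) :=
  F_variation_bound_H_lt_half_general H T t a ε hH ht0 htT ha hε
end
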